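/- Let n be even with n ≥ 4, and let B̅_2 be the n-vertex bicyclic graph obtained from the path v_1 v_2 … v_n by adding the two edges v_1 v_3 and v_1 v_4. Then τ(B̅_2) = 3n²/4 − n − 2. -/

import Mathlib

open SimpleGraph Finset

/-- The eccentricity of a vertex `v` in a graph `G`: the maximum distance from `v`
to any vertex of `G`. -/
noncomputable def ecc {V : Type} [Fintype V] (G : SimpleGraph V) (v : V) : ℕ :=
  Finset.univ.sup fun w => G.dist v w

/-- The total-eccentricity index `τ(G) = ∑_{v ∈ V(G)} e_G(v)`. -/
noncomputable def totalEcc {V : Type} [Fintype V] (G : SimpleGraph V) : ℕ :=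
  ∑ v : V, ecc G v

/-!
Write the vertices as `0, …, n - 1`, so that `B̅₂` is the path plus the chords `0 ∼ 2` and
`0 ∼ 3`. Distances are bounded above by following the path, using the chord `0 ∼ 3` as a
shortcut from `0`. They are bounded below by a height function that changes by at most one
along each edge: vertex `i ≥ 1` has height `i` and vertex `0` has height `2`. This gives
`e(0) = n - 3` and `e(i) = max (i - 1) (n - 1 - i)` for `i ≥ 1`, and summing these for
`n = 2k + 4` gives `3k² + 10k + 6 = 3n²/4 - n - 2`.
-/

section Eccentricity

variable {V : Type} [Fintype V] {G : SimpleGraph V} {v : V}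

lemma dist_le_ecc (w : V) : G.dist v w ≤ ecc G v :=
  Finset.le_sup (mem_univ w)

lemma ecc_le_iff {k : ℕ} : ecc G v ≤ k ↔ ∀ w, G.dist v w ≤ k := by
  simp [ecc]

end Eccentricity

section Height

variable {V : Type} {G : SimpleGraph V} (f : V → ℤ)

lemma SimpleGraph.Walk.sub_le_length (hf : ∀ ⦃a b⦄, G.Adj a b → f a ≤ f b + 1)
    {u v : V} (p : G.Walk u v) : f u - f v ≤ p.length := by
  induction p with
  | nil => simp
  | cons h _ ih =>
    rw [Walk.length_cons]
    have := hf h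
    push_cast
    linarith

lemma SimpleGraph.Reachable.sub_le_dist (hf : ∀ ⦃a b⦄, G.Adj a b → f a ≤ f b + 1)
    {u v : V} (h : G.Reachable u v) : f u - f v ≤ G.dist u v := by
  obtain ⟨p, hp⟩ := h.exists_walk_length_eq_dist
  exact hp ▸ p.sub_le_length f hf

end Height

lemma pathGraph_dist_le {n : ℕ} {a b : Fin n} (hab : a ≤ b) :
    (pathGraph n).dist a b ≤ b.val - a.val := by
  obtain ⟨k, hk⟩ : ∃ k, b.val = a.val + k := ⟨b - a, by omega⟩
  induction k generalizing a with
  | zero =>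
    obtain rfl : a = b := Fin.ext (by omega)
    simp
  | succ k ih =>
    obtain ⟨c, hc⟩ : ∃ c : Fin n, c.val = a.val + 1 := ⟨⟨a + 1, by omega⟩, rfl⟩
    have hac : (pathGraph n).Adj a c := pathGraph_adj.mpr (Or.inl hc.symm)
    calc (pathGraph n).dist a b
        ≤ (pathGraph n).dist a c + (pathGraph n).dist c b :=
          hac.reachable.dist_triangle_left b
      _ ≤ 1 + (b.val - c.val) := by
          gcongr
          · exact (dist_eq_one_iff_adj.mpr hac).le
          · exact ih (Fin.le_def.mpr (by omega)) (by omega)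
      _ = b.val - a.val := by omega

lemma sum_range_max_sub (k : ℕ) :
    ∑ i ∈ range (2 * k + 1), max i (2 * k - i) = 3 * k ^ 2 + 2 * k := by
  induction k with
  | zero => simp
  | succ k ih =>
    have hshift : ∑ i ∈ range (2 * k + 1), max (i + 1) (2 * (k + 1) - (i + 1)) =
        ∑ i ∈ range (2 * k + 1), (max i (2 * k - i) + 1) :=
      sum_congr rfl fun i hi => by rw [mem_range] at hi; omega
    rw [show 2 * (k + 1) + 1 = 2 * k + 1 + 1 + 1 by ring, sum_range_succ', sum_range_succ,
      hshift, sum_add_distrib, ih, sum_const, card_range, smul_eq_mul]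
    have : (k + 1) ^ 2 = k ^ 2 + 2 * k + 1 := by ring
    omega

def bicyclicB2 (n : ℕ) (hn : 4 ≤ n) : SimpleGraph (Fin n) :=
  pathGraph n ⊔
    fromEdgeSet {s(⟨0, hn.trans_lt' (by decide)⟩, ⟨2, hn.trans_lt' (by decide)⟩),
                 s(⟨0, hn.trans_lt' (by decide)⟩, ⟨3, hn.trans_lt' (by decide)⟩)}

section BicyclicB2

variable {n : ℕ} (hn : 4 ≤ n)

lemma bicyclicB2_adj {a b : Fin n} :
    (bicyclicB2 n hn).Adj a b ↔ a.val + 1 = b.val ∨ b.val + 1 = a.val ∨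
      (a.val = 0 ∧ b.val = 2) ∨ (a.val = 2 ∧ b.val = 0) ∨
      (a.val = 0 ∧ b.val = 3) ∨ (a.val = 3 ∧ b.val = 0) := by
  simp only [bicyclicB2, sup_adj, pathGraph_adj, fromEdgeSet_adj, Set.mem_insert_iff,
    Set.mem_singleton_iff, Sym2.eq_iff, Fin.ext_iff, ne_eq]
  omega

lemma bicyclicB2_reachable (a b : Fin n) : (bicyclicB2 n hn).Reachable a b :=
  (pathGraph_preconnected n a b).mono le_sup_left

lemma bicyclicB2_dist_le {a b : Fin n} (hab : a ≤ b) :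
    (bicyclicB2 n hn).dist a b ≤ b.val - a.val :=
  ((pathGraph_preconnected n a b).dist_anti le_sup_left).trans (pathGraph_dist_le hab)

lemma bicyclicB2_dist_le_of_val_eq_zero {z : Fin n} (hz : z.val = 0) (w : Fin n) :
    (bicyclicB2 n hn).dist z w ≤ max 1 (w.val - 2) := by
  have hzw := bicyclicB2_dist_le hn (a := z) (b := w) (Fin.le_def.mpr (by omega))
  by_cases hw : 3 ≤ w.val
  · obtain ⟨t, ht⟩ : ∃ t : Fin n, t.val = 3 := ⟨⟨3, by omega⟩, rfl⟩
    have hzt : (bicyclicB2 n hn).Adj z t := (bicyclicB2_adj hn).mpr (by omega)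
    have htw := bicyclicB2_dist_le hn (a := t) (b := w) (Fin.le_def.mpr (by omega))
    have := hzt.reachable.dist_triangle_left w
    rw [dist_eq_one_iff_adj.mpr hzt] at this
    omega
  · by_cases hw2 : w.val = 2
    · have hzw' : (bicyclicB2 n hn).Adj z w := (bicyclicB2_adj hn).mpr (by omega)
      rw [dist_eq_one_iff_adj.mpr hzw']
      exact le_max_left _ _
    · omega

def b2Height (v : Fin n) : ℤ := if v.val = 0 then 2 else v.val

lemma b2Height_le_add_one_of_adj {a b : Fin n} (h : (bicyclicB2 n hn).Adj a b) :
    b2Height a ≤ b2Height b + 1 := by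
  rw [bicyclicB2_adj hn] at h
  unfold b2Height
  split_ifs <;> omega

lemma b2Height_sub_le_dist (a b : Fin n) :
    b2Height a - b2Height b ≤ (bicyclicB2 n hn).dist a b :=
  (bicyclicB2_reachable hn a b).sub_le_dist _ (fun _ _ => b2Height_le_add_one_of_adj hn)

lemma ecc_bicyclicB2_of_val_eq_zero {z : Fin n} (hz : z.val = 0) :
    ecc (bicyclicB2 n hn) z = n - 3 := by
  refine le_antisymm ((ecc_le_iff).mpr fun w => ?_) ?_
  · have := bicyclicB2_dist_le_of_val_eq_zero hn hz w
    omega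
  · obtain ⟨last, hlast⟩ : ∃ w : Fin n, w.val = n - 1 := ⟨⟨n - 1, by omega⟩, rfl⟩
    have := b2Height_sub_le_dist hn last z
    rw [SimpleGraph.dist_comm] at this
    simp only [b2Height, hlast, hz] at this
    have := dist_le_ecc (G := bicyclicB2 n hn) (v := z) last
    split_ifs at * <;> omega

lemma ecc_bicyclicB2_of_val_ne_zero {v : Fin n} (hv : v.val ≠ 0) :
    ecc (bicyclicB2 n hn) v = max (v.val - 1) (n - 1 - v.val) := by
  obtain ⟨first, hfirst⟩ : ∃ w : Fin n, w.val = 1 := ⟨⟨1, by omega⟩, rfl⟩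
  obtain ⟨last, hlast⟩ : ∃ w : Fin n, w.val = n - 1 := ⟨⟨n - 1, by omega⟩, rfl⟩
  refine le_antisymm ((ecc_le_iff).mpr fun w => ?_) ?_
  · rcases le_total v w with h | h
    · have := bicyclicB2_dist_le hn h
      omega
    · by_cases hw : w.val = 0
      · have := bicyclicB2_dist_le_of_val_eq_zero hn hw v
        rw [SimpleGraph.dist_comm]
        omega
      · have := bicyclicB2_dist_le hn h
        rw [SimpleGraph.dist_comm]
        omega
  · have h1 := b2Height_sub_le_dist hn v first
    have h2 := b2Height_sub_le_dist hn last v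
    rw [SimpleGraph.dist_comm] at h2
    simp only [b2Height, hfirst, hlast, hv] at h1 h2
    have := dist_le_ecc (G := bicyclicB2 n hn) (v := v) first
    have := dist_le_ecc (G := bicyclicB2 n hn) (v := v) last
    split_ifs at * <;> omega

lemma totalEcc_bicyclicB2 :
    totalEcc (bicyclicB2 n hn) = n - 3 + ∑ i ∈ range (n - 1), max i (n - 2 - i) := by
  have hecc : ∀ v : Fin n, ecc (bicyclicB2 n hn) v =
      if v.val = 0 then n - 3 else max (v.val - 1) (n - 1 - v.val) := fun v => by
    split_ifs with hv
    · exact ecc_bicyclicB2_of_val_eq_zero hn hv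
    · exact ecc_bicyclicB2_of_val_ne_zero hn hv
  rw [totalEcc, Finset.sum_congr rfl fun v _ => hecc v,
    Fin.sum_univ_eq_sum_range (fun i => if i = 0 then n - 3 else max (i - 1) (n - 1 - i))]
  obtain ⟨m, rfl⟩ : ∃ m, n = m + 1 := ⟨n - 1, by omega⟩
  rw [sum_range_succ', add_comm, if_pos rfl]
  congr 1
  refine sum_congr rfl fun i _ => ?_
  rw [if_neg (Nat.succ_ne_zero i)]
  omega

end BicyclicB2

/-- For even `n ≥ 4`, the bicyclic graph `B̅₂` obtained from the path `v₁v₂⋯vₙ` by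
adding the edges `v₁v₃` and `v₁v₄` satisfies `τ(B̅₂) = 3n²/4 - n - 2`. -/
theorem totalEcc_B2 (n : ℕ) (hn : 4 ≤ n) (hev : Even n) :
    (totalEcc (pathGraph n ⊔
        fromEdgeSet {s((⟨0, by omega⟩ : Fin n), (⟨2, by omega⟩ : Fin n)),
                     s((⟨0, by omega⟩ : Fin n), (⟨3, by omega⟩ : Fin n))}) : ℚ) =
      3 * n ^ 2 / 4 - n - 2 := by
  obtain ⟨k, rfl⟩ : ∃ k, n = 2 * k + 4 := by
    obtain ⟨r, hr⟩ := hev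
    exact ⟨r - 2, by omega⟩
  have hsum : totalEcc (bicyclicB2 (2 * k + 4) hn) = 3 * k ^ 2 + 10 * k + 6 := by
    rw [totalEcc_bicyclicB2, show 2 * k + 4 - 1 = 2 * (k + 1) + 1 by omega,
      show 2 * k + 4 - 2 = 2 * (k + 1) by omega, sum_range_max_sub]
    ring_nf
    omega
  change (totalEcc (bicyclicB2 (2 * k + 4) hn) : ℚ) = _
  rw [hsum]
  push_cast
  ring
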